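/- arXiv:1301.2754 — 2 statements merged into one kernel-verified Lean document; each statement's English description precedes it below -/
import Mathlib

section
/- Let G be a finite group acting on a set M, let g ∈ G, and let C_g denote the centralizer of g in G. The assignment sending an object (x, h) with h·x = x of the inertia groupoid of M//G to the pair (conjugacy class of h, element of fixed set) induces a bijection between isomorphism classes of the inertia groupoid Λ(M//G) and the disjoint union over conjugacy classes [g] of G of the orbit sets M^g / C_g, where M^g = {x ∈ M : g·x = x}. -/
/-- Isomorphism in the inertia groupoid `Λ(M//G)`: objects are pairs `(g, x)` with
`g • x = x`, and `(g, x) ≅ (g', x')` iff there is `h ∈ G` with `h • x = x'` and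
`h g h⁻¹ = g'`. -/
def inertiaSetoid (G : Type*) [Group G] (M : Type*) [MulAction G M] :
    Setoid {p : G × M // p.1 • p.2 = p.2} where
  r p q := ∃ h : G, h • p.1.2 = q.1.2 ∧ h * p.1.1 * h⁻¹ = q.1.1
  iseqv := by
    constructor
    · intro p; exact ⟨1, by simp, by simp⟩
    · rintro p q ⟨h, hx, hg⟩
      refine ⟨h⁻¹, ?_, ?_⟩
      · rw [← hx, inv_smul_smul]
      · rw [← hg]; group
    · rintro p q r ⟨h₁, hx₁, hg₁⟩ ⟨h₂, hx₂, hg₂⟩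
      refine ⟨h₂ * h₁, ?_, ?_⟩
      · rw [mul_smul, hx₁, hx₂]
      · rw [← hg₂, ← hg₁]; group

/-- The quotient of the fixed-point set `M^g` by the action of the centralizer `C_g`:
`x ~ y` iff there is `h` commuting with `g` such that `h • x = y`. -/
def fixedSetoid (G : Type*) [Group G] (M : Type*) [MulAction G M] (g : G) :
    Setoid {x : M // g • x = x} where
  r x y := ∃ h : G, h * g = g * h ∧ h • x.1 = y.1
  iseqv := by
    constructor
    · intro x; exact ⟨1, by simp, by simp⟩
    · rintro x y ⟨h, hc, hx⟩
      have hcomm : Commute h g := hc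
      exact ⟨h⁻¹, hcomm.inv_left, by rw [← hx, inv_smul_smul]⟩
    · rintro x y z ⟨h₁, hc₁, hx₁⟩ ⟨h₂, hc₂, hx₂⟩
      have hcomm₁ : Commute h₁ g := hc₁
      have hcomm₂ : Commute h₂ g := hc₂
      exact ⟨h₂ * h₁, hcomm₂.mul_left hcomm₁, by rw [mul_smul, hx₁, hx₂]⟩

/-!
Every object `(g, x)` is isomorphic, via a conjugation, to one whose group element is the
chosen representative of the conjugacy class of `g`, and conjugacy classes are invariants of
isomorphism classes. Two objects with the same group element `g` are isomorphic exactly when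
their points differ by an element of the centralizer of `g`.
-/

section InertiaGroupoid

variable {G : Type*} [Group G] {M : Type*} [MulAction G M]

def inertiaConjClass : Quotient (inertiaSetoid G M) → ConjClasses G :=
  Quotient.lift (fun p => ConjClasses.mk p.1.1) fun _ _ ⟨h, _, hg⟩ =>
    ConjClasses.mk_eq_mk_iff_isConj.mpr (isConj_iff.mpr ⟨h, hg⟩)

@[simp]
lemma inertiaConjClass_mk (p : {p : G × M // p.1 • p.2 = p.2}) :
    inertiaConjClass (Quotient.mk _ p) = ConjClasses.mk p.1.1 :=
  rfl

lemma inertiaSetoid_rel_iff_fixedSetoid_rel {g : G} (x y : {x : M // g • x = x}) :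
    inertiaSetoid G M ⟨(g, x.1), x.2⟩ ⟨(g, y.1), y.2⟩ ↔ fixedSetoid G M g x y := by
  refine exists_congr fun h => ?_
  rw [and_comm, mul_inv_eq_iff_eq_mul]

def fixedToInertia (g : G) : Quotient (fixedSetoid G M g) → Quotient (inertiaSetoid G M) :=
  Quotient.lift (fun x => Quotient.mk _ ⟨(g, x.1), x.2⟩) fun x y hxy =>
    Quotient.sound ((inertiaSetoid_rel_iff_fixedSetoid_rel x y).mpr hxy)

lemma fixedToInertia_injective (g : G) : Function.Injective (fixedToInertia (M := M) g) := by
  rintro ⟨x⟩ ⟨y⟩ hxy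
  exact Quotient.sound ((inertiaSetoid_rel_iff_fixedSetoid_rel x y).mp (Quotient.exact hxy))

@[simp]
lemma inertiaConjClass_fixedToInertia (g : G) (q : Quotient (fixedSetoid G M g)) :
    inertiaConjClass (fixedToInertia g q) = ConjClasses.mk g := by
  induction q using Quotient.ind
  rfl

noncomputable def sigmaFixedToInertia
    (p : Σ c : ConjClasses G, Quotient (fixedSetoid G M (Quotient.out c))) :
    Quotient (inertiaSetoid G M) :=
  fixedToInertia p.1.out p.2

@[simp]
lemma inertiaConjClass_sigmaFixedToInertia
    (p : Σ c : ConjClasses G, Quotient (fixedSetoid G M (Quotient.out c))) :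
    inertiaConjClass (sigmaFixedToInertia p) = p.1 := by
  rw [sigmaFixedToInertia, inertiaConjClass_fixedToInertia]
  exact Quotient.out_eq p.1

lemma sigmaFixedToInertia_injective :
    Function.Injective (sigmaFixedToInertia (G := G) (M := M)) := by
  rintro ⟨c, q⟩ ⟨c', q'⟩ hqq'
  obtain rfl : c = c' := by
    simpa using congrArg inertiaConjClass hqq'
  exact Sigma.ext rfl (heq_of_eq (fixedToInertia_injective _ hqq'))

lemma sigmaFixedToInertia_surjective :
    Function.Surjective (sigmaFixedToInertia (G := G) (M := M)) := by
  rintro ⟨⟨⟨g, x⟩, hx⟩⟩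
  obtain ⟨h, hg⟩ := isConj_iff.mp (ConjClasses.mk_eq_mk_iff_isConj.mp
    (Quotient.out_eq (ConjClasses.mk g)).symm)
  have hfix : (ConjClasses.mk g).out • h • x = h • x := by
    rw [← hg, smul_smul, inv_mul_cancel_right, mul_smul, hx]
  refine ⟨⟨ConjClasses.mk g, Quotient.mk _ ⟨h • x, hfix⟩⟩, Quotient.sound ?_⟩
  exact Setoid.symm' _ ⟨h, rfl, hg⟩

end InertiaGroupoid

theorem inertia_iso_classes_general (G : Type*) [Group G] (M : Type*) [MulAction G M] :
    ∃ e : Quotient (inertiaSetoid G M) ≃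
        Σ c : ConjClasses G, Quotient (fixedSetoid G M (Quotient.out c)),
      ∀ p : {p : G × M // p.1 • p.2 = p.2},
        (e (Quotient.mk (inertiaSetoid G M) p)).1 = ConjClasses.mk p.1.1 := by
  let e := Equiv.ofBijective _
    ⟨sigmaFixedToInertia_injective (G := G) (M := M), sigmaFixedToInertia_surjective⟩
  refine ⟨e.symm, fun p => ?_⟩
  rw [← inertiaConjClass_sigmaFixedToInertia, ← inertiaConjClass_mk p]
  exact congrArg inertiaConjClass (e.apply_symm_apply _)

/-- The assignment `(g, x) ↦ (conjugacy class of g, class of x)` induces a bijection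
between the isomorphism classes of the inertia groupoid `Λ(M//G)` and the disjoint
union, over conjugacy classes `[g]` of `G`, of the orbit sets `M^g / C_g`. -/
theorem inertia_iso_classes (G : Type*) [Group G] [Fintype G] (M : Type*) [MulAction G M] :
    ∃ e : Quotient (inertiaSetoid G M) ≃
        Σ c : ConjClasses G, Quotient (fixedSetoid G M (Quotient.out c)),
      ∀ p : {p : G × M // p.1 • p.2 = p.2},
        (e (Quotient.mk (inertiaSetoid G M) p)).1 = ConjClasses.mk p.1.1 :=
  inertia_iso_classes_general G M
end

section
/- The free commutative monoid functor on groupoids is exponential: for groupoids X and Y, there is an equivalence of groupoids S(X ⊔ Y) ≃ S(X) × S(Y), where S(X) = ⨿_{n≥0} S_n ∫ X is the total symmetric power (the action groupoid of S_n on Xⁿ together with X's morphisms). -/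
open CategoryTheory

universe v u

/-- Objects of the total symmetric power `S(X) = ⨿_{n≥0} S_n ∫ X`: a natural number `n`
together with an `n`-tuple of objects of `X`. -/
structure SPObj (X : Type u) [Category.{v} X] : Type u where
  n : ℕ
  obj : Fin n → X

/-- Morphisms `(x_1,…,x_n) → (y_1,…,y_m)` in `S(X)`: a bijection `σ` (which can exist
only when `n = m`) together with morphisms `g_i : x_i ⟶ y_{σ(i)}`. -/
structure SPHom {X : Type u} [Category.{v} X] (a b : SPObj X) : Type (max v u) where
  σ : Fin a.n ≃ Fin b.n
  g : ∀ i, a.obj i ⟶ b.obj (σ i)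

/-- The total symmetric power groupoid `S(X)` of a groupoid `X`. -/
instance SPcat (X : Type u) [Category.{v} X] : Category (SPObj X) where
  Hom := SPHom
  id a := ⟨Equiv.refl _, fun _ => 𝟙 _⟩
  comp f g := ⟨f.σ.trans g.σ, fun i => f.g i ≫ g.g (f.σ i)⟩
  id_comp f := by
    cases f with
    | mk σ g =>
      show SPHom.mk ((Equiv.refl _).trans σ) (fun i => 𝟙 _ ≫ g i) = SPHom.mk σ g
      simp
      rfl
  comp_id f := by
    cases f with
    | mk σ g =>
      show SPHom.mk (σ.trans (Equiv.refl _)) (fun i => g i ≫ 𝟙 _) = SPHom.mk σ g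
      simp
      rfl
  assoc f g h := by
    cases f; cases g; cases h
    show SPHom.mk _ _ = SPHom.mk _ _
    simp [Category.assoc]
    rfl

/-!
A morphism of `S(X ⊔ Y)` has no component from an `X`-entry to a `Y`-entry, so its permutation
preserves the two colours and the morphism splits uniquely into a morphism of `S(X)` and one of
`S(Y)`; every object is, after a shuffle, the concatenation of its `X`-part and its `Y`-part. Hence
concatenation `S(X) × S(Y) ⥤ S(X ⊔ Y)` is full, faithful and essentially surjective. To make
concatenation strictly functorial we pass to the equivalent category of families indexed by
arbitrary finite types, where it is indexed by `ι ⊕ κ` instead of `Fin (m + n)`.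
-/

namespace Sum

variable {α α' β β' : Type*}

lemma isRight_eq_of_isLeft_eq {x : α ⊕ β} {y : α' ⊕ β'} (h : y.isLeft = x.isLeft) :
    y.isRight = x.isRight := by
  cases x <;> cases y <;> simp_all

end Sum

namespace Equiv

variable {α α' β β' : Type*} (e : α ⊕ β ≃ α' ⊕ β')
  (he : ∀ s, (e s).isLeft = s.isLeft)

def sumLeft : α ≃ α' :=
  sumIsLeft.symm.trans ((e.subtypeEquiv fun s => by rw [he]).trans sumIsLeft)

def sumRight : β ≃ β' :=
  sumIsRight.symm.trans
    ((e.subtypeEquiv fun s => by rw [Sum.isRight_eq_of_isLeft_eq (he s)]).trans sumIsRight)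

lemma apply_inl_eq_inl_sumLeft (a : α) : e (.inl a) = .inl (sumLeft e he a) :=
  (Sum.inl_getLeft _ _).symm

lemma apply_inr_eq_inr_sumRight (b : β) : e (.inr b) = .inr (sumRight e he b) :=
  (Sum.inr_getRight _ _).symm

lemma sumCongr_sumLeft_sumRight :
    (sumLeft e he).sumCongr (sumRight e he) = e := by
  ext (a | b)
  · rw [apply_inl_eq_inl_sumLeft e he]; rfl
  · rw [apply_inr_eq_inr_sumRight e he]; rfl

end Equiv

namespace CategoryTheory

lemma Sum.isLeft_eq_of_hom {C D : Type*} [Category C] [Category D] {x y : C ⊕ D} (f : x ⟶ y) :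
    y.isLeft = x.isLeft := by
  cases x <;> cases y
  · rfl
  · exact (hom_inl_inr_false _ _ f).elim
  · exact (hom_inr_inl_false _ _ f).elim
  · rfl

def Sum.fullyFaithfulInl (C D : Type*) [Category C] [Category D] :
    (Sum.inl_ C D).FullyFaithful where
  preimage {x y} f := (show ULift (x ⟶ y) from f).down

def Sum.fullyFaithfulInr (C D : Type*) [Category C] [Category D] :
    (Sum.inr_ C D).FullyFaithful where
  preimage {x y} f := (show ULift (x ⟶ y) from f).down

end CategoryTheory

structure FinFamily (X : Type u) where
  ι : Type
  [finite : Finite ι]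
  obj : ι → X

attribute [instance] FinFamily.finite

namespace FinFamily

variable {X : Type u} [Category.{v} X]

structure Hom (a b : FinFamily X) : Type (max v u) where
  σ : a.ι ≃ b.ι
  g : ∀ i, a.obj i ⟶ b.obj (σ i)

lemma Hom.ext {a b : FinFamily X} {f f' : Hom a b} (hσ : f.σ = f'.σ)
    (hg : ∀ i, f.g i ≍ f'.g i) : f = f' := by
  cases f; cases f'
  subst hσ
  congr
  exact funext fun i => eq_of_heq (hg i)

instance : Category (FinFamily X) where
  Hom := Hom
  id _ := ⟨Equiv.refl _, fun _ => 𝟙 _⟩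
  comp f g := ⟨f.σ.trans g.σ, fun i => f.g i ≫ g.g (f.σ i)⟩
  id_comp _ := Hom.ext (Equiv.refl_trans _) fun _ => heq_of_eq (Category.id_comp _)
  comp_id _ := Hom.ext (Equiv.trans_refl _) fun _ => heq_of_eq (Category.comp_id _)
  assoc _ _ _ := Hom.ext (Equiv.trans_assoc _ _ _) fun _ => heq_of_eq (Category.assoc _ _ _)

@[simp] lemma id_σ (a : FinFamily X) : (𝟙 a : a ⟶ a).σ = Equiv.refl _ := rfl
@[simp] lemma id_g (a : FinFamily X) (i : a.ι) : (𝟙 a : a ⟶ a).g i = 𝟙 (a.obj i) := rfl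

@[simp] lemma comp_σ {a b c : FinFamily X} (f : a ⟶ b) (g : b ⟶ c) :
    (f ≫ g).σ = f.σ.trans g.σ := rfl
@[simp] lemma comp_g {a b c : FinFamily X} (f : a ⟶ b) (g : b ⟶ c) (i : a.ι) :
    (f ≫ g).g i = f.g i ≫ g.g (f.σ i) := rfl

lemma Hom.congr_g {a b : FinFamily X} {f f' : a ⟶ b} (h : f = f') (i : a.ι) :
    f.g i ≍ f'.g i := by
  rw [h]

def reindexIso (a : FinFamily X) {κ : Type} [Finite κ] (e : κ ≃ a.ι) :
    (⟨κ, a.obj ∘ e⟩ : FinFamily X) ≅ a where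
  hom := ⟨e, fun _ => 𝟙 _⟩
  inv := ⟨e.symm, fun i => eqToHom (congrArg a.obj (e.apply_symm_apply i).symm)⟩
  hom_inv_id := Hom.ext e.self_trans_symm fun _ => by simpa using eqToHom_heq_id_dom _ _ _
  inv_hom_id := Hom.ext e.symm_trans_self fun _ => by simpa using eqToHom_heq_id_dom _ _ _

end FinFamily

namespace SPObj

variable (X : Type u) [Category.{v} X]

def toFinFamily : SPObj X ⥤ FinFamily X where
  obj a := ⟨Fin a.n, a.obj⟩
  map f := ⟨f.σ, f.g⟩

def fullyFaithfulToFinFamily : (toFinFamily X).FullyFaithful where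
  preimage f := ⟨f.σ, f.g⟩

instance : (toFinFamily X).Full := (fullyFaithfulToFinFamily X).full

instance : (toFinFamily X).Faithful := (fullyFaithfulToFinFamily X).faithful

instance : (toFinFamily X).EssSurj :=
  ⟨fun c => ⟨⟨Nat.card c.ι, c.obj ∘ (Finite.equivFin c.ι).symm⟩,
    ⟨c.reindexIso (Finite.equivFin c.ι).symm⟩⟩⟩

instance : (toFinFamily X).IsEquivalence := {}

noncomputable def equivFinFamily : SPObj X ≌ FinFamily X := (toFinFamily X).asEquivalence

end SPObj

namespace FinFamily

variable {X Y : Type u}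

def sum (a : FinFamily X) (b : FinFamily Y) : FinFamily (X ⊕ Y) :=
  ⟨a.ι ⊕ b.ι, Sum.elim (Sum.inl ∘ a.obj) (Sum.inr ∘ b.obj)⟩

lemma isLeft_sum_obj (a : FinFamily X) (b : FinFamily Y) (s : a.ι ⊕ b.ι) :
    ((sum a b).obj s).isLeft = s.isLeft := by
  cases s <;> rfl

variable [Category.{v} X] [Category.{v} Y]

def sumHom {a a' : FinFamily X} {b b' : FinFamily Y} (f : a ⟶ a') (g : b ⟶ b') :
    sum a b ⟶ sum a' b' :=
  ⟨f.σ.sumCongr g.σ, fun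
    | .inl i => (Sum.inl_ X Y).map (f.g i)
    | .inr j => (Sum.inr_ X Y).map (g.g j)⟩

def sumFunctor : FinFamily X × FinFamily Y ⥤ FinFamily (X ⊕ Y) where
  obj p := sum p.1 p.2
  map f := sumHom f.1 f.2
  map_id _ := Hom.ext Equiv.sumCongr_refl <| by
    rintro (i | j)
    · exact heq_of_eq ((Sum.inl_ X Y).map_id _)
    · exact heq_of_eq ((Sum.inr_ X Y).map_id _)
  map_comp _ _ := Hom.ext (Equiv.sumCongr_trans _ _ _ _).symm <| by
    rintro (i | j)
    · exact heq_of_eq ((Sum.inl_ X Y).map_comp _ _)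
    · exact heq_of_eq ((Sum.inr_ X Y).map_comp _ _)

section Full

variable {a a' : FinFamily X} {b b' : FinFamily Y} (h : sum a b ⟶ sum a' b')

lemma isLeft_σ_apply (s : a.ι ⊕ b.ι) : (h.σ s).isLeft = s.isLeft :=
  (isLeft_sum_obj a' b' (h.σ s)).symm.trans
    ((Sum.isLeft_eq_of_hom (h.g s)).trans (isLeft_sum_obj a b s))

def leftHom : a ⟶ a' :=
  ⟨h.σ.sumLeft (isLeft_σ_apply h), fun i => (Sum.fullyFaithfulInl X Y).preimage
    (h.g (.inl i) ≫
      eqToHom (congrArg (sum a' b').obj (h.σ.apply_inl_eq_inl_sumLeft (isLeft_σ_apply h) i)))⟩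

def rightHom : b ⟶ b' :=
  ⟨h.σ.sumRight (isLeft_σ_apply h), fun j => (Sum.fullyFaithfulInr X Y).preimage
    (h.g (.inr j) ≫
      eqToHom (congrArg (sum a' b').obj (h.σ.apply_inr_eq_inr_sumRight (isLeft_σ_apply h) j)))⟩

lemma sumHom_leftHom_rightHom : sumHom (leftHom h) (rightHom h) = h :=
  Hom.ext (h.σ.sumCongr_sumLeft_sumRight (isLeft_σ_apply h)) <| by
    rintro (i | j)
    · exact (heq_of_eq ((Sum.fullyFaithfulInl X Y).map_preimage (h.g (.inl i) ≫ _))).trans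
        (comp_eqToHom_heq _ _)
    · exact (heq_of_eq ((Sum.fullyFaithfulInr X Y).map_preimage (h.g (.inr j) ≫ _))).trans
        (comp_eqToHom_heq _ _)

end Full

lemma sumHom_injective {a a' : FinFamily X} {b b' : FinFamily Y} {f f' : a ⟶ a'}
    {g g' : b ⟶ b'} (e : sumHom f g = sumHom f' g') : f = f' ∧ g = g' := by
  obtain ⟨σ, u⟩ := f
  obtain ⟨σ', u'⟩ := f'
  obtain ⟨τ, v⟩ := g
  obtain ⟨τ', v'⟩ := g'
  obtain rfl : σ = σ' :=
    Equiv.ext fun i => Sum.inl_injective (congrArg (fun k => k.σ (.inl i)) e)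
  obtain rfl : τ = τ' :=
    Equiv.ext fun j => Sum.inr_injective (congrArg (fun k => k.σ (.inr j)) e)
  constructor
  · refine Hom.ext rfl fun i => heq_of_eq ?_
    exact (Sum.fullyFaithfulInl X Y).map_injective (eq_of_heq (Hom.congr_g e (.inl i)))
  · refine Hom.ext rfl fun j => heq_of_eq ?_
    exact (Sum.fullyFaithfulInr X Y).map_injective (eq_of_heq (Hom.congr_g e (.inr j)))

def leftPart (c : FinFamily (X ⊕ Y)) : FinFamily X :=
  ⟨{i // (c.obj i).isLeft}, fun i => (c.obj i).getLeft i.2⟩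

def rightPart (c : FinFamily (X ⊕ Y)) : FinFamily Y :=
  ⟨{i // ¬ (c.obj i).isLeft}, fun i => (c.obj i).getRight (Sum.not_isLeft.mp i.2)⟩

def sumLeftPartRightPartIso (c : FinFamily (X ⊕ Y)) : sum (leftPart c) (rightPart c) ≅ c :=
  eqToIso (by
    refine congrArg (FinFamily.mk _) (funext ?_)
    rintro (⟨i, hi⟩ | ⟨i, hi⟩)
    · exact Sum.inl_getLeft _ hi
    · exact Sum.inr_getRight _ _) ≪≫
  c.reindexIso (Equiv.sumCompl fun i => (c.obj i).isLeft)

instance : (sumFunctor (X := X) (Y := Y)).Full :=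
  ⟨fun h => ⟨(leftHom h, rightHom h), sumHom_leftHom_rightHom h⟩⟩

instance : (sumFunctor (X := X) (Y := Y)).Faithful :=
  ⟨fun e => Prod.ext_iff.mpr (sumHom_injective e)⟩

instance : (sumFunctor (X := X) (Y := Y)).EssSurj :=
  ⟨fun c => ⟨(leftPart c, rightPart c), ⟨sumLeftPartRightPartIso c⟩⟩⟩

instance : (sumFunctor (X := X) (Y := Y)).IsEquivalence := {}

noncomputable def sumEquiv : FinFamily X × FinFamily Y ≌ FinFamily (X ⊕ Y) :=
  sumFunctor.asEquivalence

end FinFamily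

/-- The total symmetric power is exponential: for groupoids `X` and `Y` there is an
equivalence of groupoids `S(X ⊔ Y) ≃ S(X) × S(Y)`. -/
theorem sp_exponential (X Y : Type u) [Groupoid.{v} X] [Groupoid.{v} Y] :
    Nonempty (SPObj (X ⊕ Y) ≌ SPObj X × SPObj Y) :=
  ⟨(SPObj.equivFinFamily (X ⊕ Y)).trans <| FinFamily.sumEquiv.symm.trans <|
    ((SPObj.equivFinFamily X).prod (SPObj.equivFinFamily Y)).symm⟩
end
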